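/- Let V be a finite-dimensional real vector space, J₁, J₂ two commuting linear generalized complex structures on E = V ⊕ V* such that G(e₁,e₂) := ⟨J₁J₂ e₁, e₂⟩ is positive definite. Let K ⊆ E be isotropic with J₁(K) = K. Then the G-orthogonal of K equals J₂(K^⊥), and K^⊥ = K ⊕ (J₂(K^⊥) ∩ K^⊥); consequently the projection K^⊥ → K^⊥/K restricts to a linear isomorphism J₂(K^⊥) ∩ K^⊥ ≅ K^⊥/K. -/

import Mathlib

open Module Submodule

noncomputable section

variable (V : Type*) [AddCommGroup V] [Module ℝ V]

abbrev EE := V × Module.Dual ℝ V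

def pairE : LinearMap.BilinForm ℝ (EE V) :=
  LinearMap.mk₂ ℝ (fun u v => (u.2 v.1 + v.2 u.1) / 2)
    (by intro a b c; simp; ring)
    (by intro r a b; simp [smul_eq_mul]; ring)
    (by intro a b c; simp; ring)
    (by intro r a b; simp [smul_eq_mul]; ring)

def orthE (D : Submodule ℝ (EE V)) : Submodule ℝ (EE V) where
  carrier := {e | ∀ d ∈ D, pairE V e d = 0}
  add_mem' := by
    intro a b ha hb d hd
    simp only [map_add, LinearMap.add_apply, ha d hd, hb d hd, add_zero]
  zero_mem' := by intro d hd; simp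
  smul_mem' := by
    intro r a ha d hd
    simp only [map_smul, LinearMap.smul_apply, ha d hd, smul_zero]

def piE : EE V →ₗ[ℝ] V := LinearMap.fst ℝ V (Module.Dual ℝ V)

instance instQuotE (P : Submodule ℝ (EE V)) : HasQuotient ↥P (Submodule ℝ ↥P) :=
  @Submodule.hasQuotient ℝ ↥P _ P.addCommGroup _

theorem stmt_14 [FiniteDimensional ℝ V]
    (J₁ J₂ : EE V →ₗ[ℝ] EE V)
    (hJ₁2 : ∀ e, J₁ (J₁ e) = -e) (hJ₂2 : ∀ e, J₂ (J₂ e) = -e)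
    (hJ₁p : ∀ u v, pairE V (J₁ u) (J₁ v) = pairE V u v)
    (hJ₂p : ∀ u v, pairE V (J₂ u) (J₂ v) = pairE V u v)
    (hcomm : ∀ e, J₁ (J₂ e) = J₂ (J₁ e))
    (hGsymm : ∀ u v, pairE V (J₁ (J₂ u)) v = pairE V (J₁ (J₂ v)) u)
    (hGpos : ∀ e : EE V, e ≠ 0 → 0 < pairE V (J₁ (J₂ e)) e)
    (K : Submodule ℝ (EE V)) (hK : K ≤ orthE V K) (hJ₁K : K.map J₁ = K) :
    ({e : EE V | ∀ k ∈ K, pairE V (J₁ (J₂ e)) k = 0}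
        = ((orthE V K).map J₂ : Set (EE V))) ∧
    K ⊓ ((orthE V K).map J₂ ⊓ orthE V K) = ⊥ ∧
    K ⊔ ((orthE V K).map J₂ ⊓ orthE V K) = orthE V K ∧
    ∀ e ∈ orthE V K, ∃! f, f ∈ (orthE V K).map J₂ ⊓ orthE V K ∧ e - f ∈ K := by
  classical
  set B : LinearMap.BilinForm ℝ (EE V) := pairE V ∘ₗ (J₁ ∘ₗ J₂) with hB
  have hBapp : ∀ u v, B u v = pairE V (J₁ (J₂ u)) v := fun u v => rfl
  have hpsymm : ∀ u v : EE V, pairE V u v = pairE V v u := by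
    intro u v; simp [pairE]; ring
  have hJ₁mem : ∀ k, k ∈ K → J₁ k ∈ K := by
    intro k hk; rw [← hJ₁K]; exact Submodule.mem_map_of_mem hk
  -- key membership equivalence
  have hmem : ∀ e : EE V,
      (∀ k ∈ K, pairE V (J₁ (J₂ e)) k = 0) ↔ e ∈ (orthE V K).map J₂ := by
    intro e
    constructor
    · intro h
      refine ⟨-(J₂ e), ?_, by simp [hJ₂2]⟩
      intro d hd
      have := h (J₁ d) (hJ₁mem d hd)
      have h2 : pairE V (J₁ (J₂ e)) (J₁ d) = pairE V (J₂ e) d := hJ₁p _ _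
      rw [h2] at this
      simp [this]
    · rintro ⟨x, hx, rfl⟩ k hk
      have h1 : J₁ (J₂ (J₂ x)) = -(J₁ x) := by rw [hJ₂2]; simp
      have h2 : pairE V (J₁ x) (J₁ (J₁ k)) = pairE V x (J₁ k) := hJ₁p _ _
      have h3 : pairE V x (J₁ k) = 0 := hx (J₁ k) (hJ₁mem k hk)
      rw [h1]
      have h4 : pairE V (J₁ x) k = 0 := by
        have : pairE V (J₁ x) (J₁ (J₁ k)) = pairE V (J₁ x) (-k) := by rw [hJ₁2]
        rw [this, h3] at h2
        simpa using h2.symm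
      simp [h4]
  -- the Gram form orthogonal agrees with the J₂ image
  have hGorth : B.orthogonal K = (orthE V K).map J₂ := by
    ext e
    rw [LinearMap.BilinForm.mem_orthogonal_iff, ← hmem e]
    constructor
    · intro h k hk
      have := h k hk
      rw [hBapp, hGsymm] at this
      exact this
    · intro h k hk
      rw [hBapp, hGsymm]
      exact h k hk
  have hrefl : B.IsRefl := by
    intro u v h
    rw [hBapp] at h ⊢
    rwa [hGsymm]
  have hres : (B.restrict K).Nondegenerate := by
    have hrr : LinearMap.IsRefl (B.restrict K) := fun u v h => hrefl u v h
    suffices hL : LinearMap.SeparatingLeft (B.restrict K) from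
      ⟨hL, fun y hy => hL y (fun x => hrr x y (hy x))⟩
    intro x hx
    by_contra hx0
    have hne : (x : EE V) ≠ 0 := fun h => hx0 (Subtype.ext h)
    have := hGpos (x : EE V) hne
    have h0 : pairE V (J₁ (J₂ (x : EE V))) (x : EE V) = 0 := hx x
    rw [h0] at this
    exact lt_irrefl 0 this
  have hcompl : IsCompl K (B.orthogonal K) :=
    LinearMap.BilinForm.isCompl_orthogonal_of_restrict_nondegenerate hrefl hres
  rw [hGorth] at hcompl
  -- part 1
  have part1 : ({e : EE V | ∀ k ∈ K, pairE V (J₁ (J₂ e)) k = 0}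
      = ((orthE V K).map J₂ : Set (EE V))) := by
    ext e; exact hmem e
  -- part 2
  have part2 : K ⊓ ((orthE V K).map J₂ ⊓ orthE V K) = ⊥ := by
    rw [eq_bot_iff]
    refine le_trans ?_ hcompl.disjoint.le_bot
    exact le_inf inf_le_left (le_trans inf_le_right inf_le_left)
  -- part 3
  have part3 : K ⊔ ((orthE V K).map J₂ ⊓ orthE V K) = orthE V K := by
    apply le_antisymm
    · exact sup_le hK (le_trans inf_le_right le_rfl)
    · intro e he
      have : e ∈ K ⊔ (orthE V K).map J₂ := by
        rw [hcompl.sup_eq_top]; trivial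
      obtain ⟨k, hk, g, hg, hkg⟩ := Submodule.mem_sup.mp this
      refine Submodule.mem_sup.mpr ⟨k, hk, g, ⟨hg, ?_⟩, hkg⟩
      have : g = e - k := by rw [← hkg]; abel
      rw [this]
      exact (orthE V K).sub_mem he (hK hk)
  refine ⟨part1, part2, part3, ?_⟩
  -- part 4
  intro e he
  have : e ∈ K ⊔ ((orthE V K).map J₂ ⊓ orthE V K) := by rw [part3]; exact he
  obtain ⟨k, hk, g, hg, hkg⟩ := Submodule.mem_sup.mp this
  refine ⟨g, ⟨hg, by rw [← hkg]; simpa using hk⟩, ?_⟩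
  rintro f ⟨hf, hef⟩
  have hd : f - g ∈ K ⊓ ((orthE V K).map J₂ ⊓ orthE V K) := by
    constructor
    · have : f - g = (e - g) - (e - f) := by abel
      rw [this]
      exact K.sub_mem (by rw [← hkg]; simpa using hk) hef
    · exact Submodule.sub_mem _ hf hg
  rw [part2] at hd
  have : f - g = 0 := hd
  linear_combination (norm := abel) this
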